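/- arXiv:2504.04938 — 2 statements merged into one kernel-verified Lean document; each statement's English description precedes it below -/
import Mathlib

section
/- (Deterministic LQ optimality, noiseless analogue of Lemma 2.1 / Remark 2.1) Assume Q_I, Q, Q̄_I, Q̄ are symmetric positive semidefinite and R is symmetric positive definite. Let z, ū : [0,T] → ℝ^n, ℝ^m be continuous, let P1 solve the Riccati equation on [0,T], and let g : [0,T] → ℝ^n solve g'(t) = −[(Aᵀ − P1(t)BR⁻¹Bᵀ)g(t) + (P1(t)C − QΓ)z(t) + P1(t)Fū(t) − Q_I s − Qη] with g(T) = −Q̄_I s̄ − Q̄(Γ̄z(T) + η̄). For a continuous control u : [0,T] → ℝ^m let x_u solve x' = Ax + Bu + Cz(t) + Fū(t), x(0) = x₀, and define J(u) := ½∫_0^T[(x_u − s)ᵀQ_I(x_u − s) + uᵀRu + (x_u − Γz − η)ᵀQ(x_u − Γz − η)] dt + ½(x_u(T) − s̄)ᵀQ̄_I(x_u(T) − s̄) + ½(x_u(T) − Γ̄z(T) − η̄)ᵀQ̄(x_u(T) − Γ̄z(T) − η̄). Let x* be the solution of the closed-loop equation x' = Ax − BR⁻¹Bᵀ(P1(t)x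 + g(t)) + Cz(t) + Fū(t), x(0) = x₀, and set u*(t) := −R⁻¹Bᵀ(P1(t)x*(t) + g(t)). Then J(u*) ≤ J(u) for every continuous control u. -/
open scoped Matrix

attribute [local instance] Matrix.normedAddCommGroup Matrix.normedSpace

/-- The LQ cost functional of an agent: running cost plus terminal cost, for control `u`
and corresponding state trajectory `x`, given mean-field trajectories `z` (the control
average only enters the dynamics, not the cost). -/
noncomputable def lqCost {n m : ℕ} (T : ℝ)
    (QI Q QbI Qb Γ Γb : Matrix (Fin n) (Fin n) ℝ)
    (R : Matrix (Fin m) (Fin m) ℝ)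
    (s η sb ηb : Fin n → ℝ)
    (z : ℝ → Fin n → ℝ)
    (u : ℝ → Fin m → ℝ) (x : ℝ → Fin n → ℝ) : ℝ :=
  (1/2) * (∫ t in (0:ℝ)..T,
      ((x t - s) ⬝ᵥ (QI *ᵥ (x t - s)) + (u t) ⬝ᵥ (R *ᵥ u t)
        + (x t - (Γ *ᵥ z t + η)) ⬝ᵥ (Q *ᵥ (x t - (Γ *ᵥ z t + η)))))
    + (1/2) * ((x T - sb) ⬝ᵥ (QbI *ᵥ (x T - sb)))
    + (1/2) * ((x T - (Γb *ᵥ z T + ηb)) ⬝ᵥ (Qb *ᵥ (x T - (Γb *ᵥ z T + ηb))))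

/-! The cost is a convex quadratic functional, so `J u ≥ J u* + DJ(u*)[u - u*]` and it suffices
that the first variation vanishes. Along `x*` the vector `p = P1 x* + g` is the costate: the Riccati
equation for `P1` and the linear equation for `g` are exactly what makes `p' = -Aᵀ p - ∇ₓℓ(x*)` with
`p(T) = ∇φ(x*(T))`, while `u* = -R⁻¹Bᵀ p` gives `R u* = -Bᵀ p`. The deviation `δ = x_u - x*` solves
`δ' = A δ + B (u - u*)` with `δ(0) = 0`, so `(p ⬝ δ)' = -(∇ₓℓ(x*) ⬝ δ + R u* ⬝ (u - u*))`: the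
running part of the first variation integrates to `-p(T) ⬝ δ(T)` and cancels the terminal part. -/

open Set

section Calculus

variable {𝕜 ι κ : Type*} [NontriviallyNormedField 𝕜] {s : Set 𝕜} {t : 𝕜}

theorem HasDerivWithinAt.dotProduct [Fintype ι] {a b : 𝕜 → ι → 𝕜} {a' b' : ι → 𝕜}
    (ha : HasDerivWithinAt a a' s t) (hb : HasDerivWithinAt b b' s t) :
    HasDerivWithinAt (fun x => a x ⬝ᵥ b x) (a' ⬝ᵥ b t + a t ⬝ᵥ b') s t := by
  unfold _root_.dotProduct
  rw [← Finset.sum_add_distrib]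
  exact HasDerivWithinAt.fun_sum fun i _ =>
    (hasDerivWithinAt_pi.1 ha i).mul (hasDerivWithinAt_pi.1 hb i)

theorem HasDerivWithinAt.matrix_mulVec [Fintype κ] {M : 𝕜 → Matrix ι κ 𝕜} {M' : Matrix ι κ 𝕜}
    {v : 𝕜 → κ → 𝕜} {v' : κ → 𝕜}
    (hM : HasDerivWithinAt M M' s t) (hv : HasDerivWithinAt v v' s t) :
    HasDerivWithinAt (fun x => M x *ᵥ v x) (M' *ᵥ v t + M t *ᵥ v') s t :=
  hasDerivWithinAt_pi.2 fun i =>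
    (hasDerivWithinAt_pi.1 (show HasDerivWithinAt (fun x => (M x : ι → κ → 𝕜)) M' s t from hM)
      i).dotProduct hv

end Calculus

theorem Matrix.PosSemidef.dotProduct_mulVec_add_two_mul_le {ι : Type*} [Fintype ι]
    {M : Matrix ι ι ℝ} (hM : M.PosSemidef) (x y : ι → ℝ) :
    x ⬝ᵥ (M *ᵥ x) + 2 * ((M *ᵥ x) ⬝ᵥ (y - x)) ≤ y ⬝ᵥ (M *ᵥ y) := by
  have hMT : Mᵀ = M := by rw [← Matrix.conjTranspose_eq_transpose_of_trivial, hM.1.eq]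
  have hsymm : x ⬝ᵥ (M *ᵥ (y - x)) = (M *ᵥ x) ⬝ᵥ (y - x) := by
    rw [Matrix.dotProduct_mulVec, ← Matrix.mulVec_transpose, hMT]
  have hrem := hM.dotProduct_mulVec_nonneg (y - x)
  simp only [star_trivial] at hrem
  calc x ⬝ᵥ (M *ᵥ x) + 2 * ((M *ᵥ x) ⬝ᵥ (y - x))
      ≤ x ⬝ᵥ (M *ᵥ x) + 2 * ((M *ᵥ x) ⬝ᵥ (y - x)) + (y - x) ⬝ᵥ (M *ᵥ (y - x)) :=
        le_add_of_nonneg_right hrem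
    _ = (x + (y - x)) ⬝ᵥ (M *ᵥ (x + (y - x))) := by
        simp only [Matrix.mulVec_add, dotProduct_add, add_dotProduct, hsymm,
          dotProduct_comm (y - x) (M *ᵥ x)]
        ring
    _ = y ⬝ᵥ (M *ᵥ y) := by rw [add_sub_cancel]

theorem integral_dotProduct_adjoint {ι κ : Type*} [Fintype ι] [Fintype κ]
    {A : Matrix ι ι ℝ} {B : Matrix ι κ ℝ} {p δ h : ℝ → ι → ℝ} {v : ℝ → κ → ℝ} {a b : ℝ}
    (hab : a ≤ b)
    (hp : ∀ t ∈ Icc a b, HasDerivWithinAt p (-(Aᵀ *ᵥ p t) - h t) (Icc a b) t)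
    (hδ : ∀ t ∈ Icc a b, HasDerivWithinAt δ (A *ᵥ δ t + B *ᵥ v t) (Icc a b) t)
    (hh : ContinuousOn h (Icc a b)) (hv : ContinuousOn v (Icc a b)) :
    ∫ t in a..b, (h t ⬝ᵥ δ t - (Bᵀ *ᵥ p t) ⬝ᵥ v t) = p a ⬝ᵥ δ a - p b ⬝ᵥ δ b := by
  have hpc := HasDerivWithinAt.continuousOn hp
  have hδc := HasDerivWithinAt.continuousOn hδ
  have hderiv : ∀ t ∈ Icc a b, HasDerivWithinAt (fun τ => -(p τ ⬝ᵥ δ τ))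
      (h t ⬝ᵥ δ t - (Bᵀ *ᵥ p t) ⬝ᵥ v t) (Icc a b) t := by
    intro t ht
    refine ((hp t ht).dotProduct (hδ t ht)).neg.congr_deriv ?_
    simp only [sub_dotProduct, neg_dotProduct, dotProduct_add, Matrix.dotProduct_mulVec,
      Matrix.mulVec_transpose]
    ring
  rw [intervalIntegral.integral_eq_sub_of_hasDerivAt_of_le hab (by fun_prop)
    (fun t ht => (hderiv t (Ioo_subset_Icc_self ht)).hasDerivAt (Icc_mem_nhds ht.1 ht.2))
    (ContinuousOn.intervalIntegrable_of_Icc hab (by fun_prop))]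
  ring

theorem hasDerivWithinAt_riccati_costate {ι κ : Type*} [Fintype ι] [Fintype κ] [DecidableEq κ]
    {A C QI Q Γ : Matrix ι ι ℝ} {B F : Matrix ι κ ℝ} {R : Matrix κ κ ℝ} {s η : ι → ℝ}
    {P : ℝ → Matrix ι ι ℝ} {g x z : ℝ → ι → ℝ} {ubar : ℝ → κ → ℝ} {S : Set ℝ} {t : ℝ}
    (hP : HasDerivWithinAt P
      (-(P t * A + Aᵀ * P t + (QI + Q) - P t * B * R⁻¹ * Bᵀ * P t)) S t)
    (hg : HasDerivWithinAt g
      (-((Aᵀ - P t * B * R⁻¹ * Bᵀ) *ᵥ g t + (P t * C - Q * Γ) *ᵥ z t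
        + (P t * F) *ᵥ ubar t - QI *ᵥ s - Q *ᵥ η)) S t)
    (hx : HasDerivWithinAt x
      (A *ᵥ x t - (B * R⁻¹ * Bᵀ) *ᵥ (P t *ᵥ x t + g t) + C *ᵥ z t + F *ᵥ ubar t) S t) :
    HasDerivWithinAt (fun τ => P τ *ᵥ x τ + g τ)
      (-(Aᵀ *ᵥ (P t *ᵥ x t + g t)) - (QI *ᵥ (x t - s) + Q *ᵥ (x t - (Γ *ᵥ z t + η)))) S t := by
  refine ((hP.matrix_mulVec hx).add hg).congr_deriv ?_
  simp only [Matrix.add_mulVec, Matrix.sub_mulVec, Matrix.neg_mulVec, Matrix.mulVec_add,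
    Matrix.mulVec_sub, ← Matrix.mulVec_mulVec]
  abel

/-- `DJ(u, x)[v, δ]`: the derivative of `lqCost` along `(v, δ)` when the weights are symmetric. -/
noncomputable def lqFirstVariation {n m : ℕ} (T : ℝ)
    (QI Q QbI Qb Γ Γb : Matrix (Fin n) (Fin n) ℝ) (R : Matrix (Fin m) (Fin m) ℝ)
    (s η sb ηb : Fin n → ℝ) (z : ℝ → Fin n → ℝ) (u : ℝ → Fin m → ℝ) (x : ℝ → Fin n → ℝ)
    (v : ℝ → Fin m → ℝ) (δ : ℝ → Fin n → ℝ) : ℝ :=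
  (∫ t in (0:ℝ)..T,
      ((QI *ᵥ (x t - s) + Q *ᵥ (x t - (Γ *ᵥ z t + η))) ⬝ᵥ δ t + (R *ᵥ u t) ⬝ᵥ v t))
    + (QbI *ᵥ (x T - sb) + Qb *ᵥ (x T - (Γb *ᵥ z T + ηb))) ⬝ᵥ δ T

theorem lqCost_add_lqFirstVariation_le {n m : ℕ} {T : ℝ} (hT : 0 ≤ T)
    {QI Q QbI Qb : Matrix (Fin n) (Fin n) ℝ} {R : Matrix (Fin m) (Fin m) ℝ}
    (hQI : QI.PosSemidef) (hQ : Q.PosSemidef) (hQbI : QbI.PosSemidef) (hQb : Qb.PosSemidef)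
    (hR : R.PosSemidef) (Γ Γb : Matrix (Fin n) (Fin n) ℝ) (s η sb ηb : Fin n → ℝ)
    {z x x' : ℝ → Fin n → ℝ} {u u' : ℝ → Fin m → ℝ}
    (hz : ContinuousOn z (Icc 0 T)) (hx : ContinuousOn x (Icc 0 T))
    (hx' : ContinuousOn x' (Icc 0 T)) (hu : ContinuousOn u (Icc 0 T))
    (hu' : ContinuousOn u' (Icc 0 T)) :
    lqCost T QI Q QbI Qb Γ Γb R s η sb ηb z u' x'
        + lqFirstVariation T QI Q QbI Qb Γ Γb R s η sb ηb z u' x' (u - u') (x - x')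
      ≤ lqCost T QI Q QbI Qb Γ Γb R s η sb ηb z u x := by
  have tangent {k : ℕ} {M : Matrix (Fin k) (Fin k) ℝ} (hM : M.PosSemidef) (y y' c : Fin k → ℝ) :
      (y' - c) ⬝ᵥ (M *ᵥ (y' - c)) + 2 * ((M *ᵥ (y' - c)) ⬝ᵥ (y - y'))
        ≤ (y - c) ⬝ᵥ (M *ᵥ (y - c)) := by
    simpa only [sub_sub_sub_cancel_right] using
      hM.dotProduct_mulVec_add_two_mul_le (y' - c) (y - c)
  have hrun : ∫ t in (0:ℝ)..T,
        ((x' t - s) ⬝ᵥ (QI *ᵥ (x' t - s)) + u' t ⬝ᵥ (R *ᵥ u' t)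
          + (x' t - (Γ *ᵥ z t + η)) ⬝ᵥ (Q *ᵥ (x' t - (Γ *ᵥ z t + η)))
          + 2 * ((QI *ᵥ (x' t - s) + Q *ᵥ (x' t - (Γ *ᵥ z t + η))) ⬝ᵥ (x t - x' t)
            + (R *ᵥ u' t) ⬝ᵥ (u t - u' t)))
      ≤ ∫ t in (0:ℝ)..T,
        ((x t - s) ⬝ᵥ (QI *ᵥ (x t - s)) + u t ⬝ᵥ (R *ᵥ u t)
          + (x t - (Γ *ᵥ z t + η)) ⬝ᵥ (Q *ᵥ (x t - (Γ *ᵥ z t + η)))) := by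
    refine intervalIntegral.integral_mono_on hT (ContinuousOn.intervalIntegrable_of_Icc hT
      (by fun_prop)) (ContinuousOn.intervalIntegrable_of_Icc hT (by fun_prop)) fun t _ => ?_
    have h1 := tangent hQI (x t) (x' t) s
    have h2 := tangent hR (u t) (u' t) 0
    have h3 := tangent hQ (x t) (x' t) (Γ *ᵥ z t + η)
    simp only [sub_zero] at h2
    simp only [add_dotProduct]
    linarith
  rw [intervalIntegral.integral_add (ContinuousOn.intervalIntegrable_of_Icc hT (by fun_prop))
    (ContinuousOn.intervalIntegrable_of_Icc hT (by fun_prop)),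
    intervalIntegral.integral_const_mul] at hrun
  have h4 := tangent hQbI (x T) (x' T) sb
  have h5 := tangent hQb (x T) (x' T) (Γb *ᵥ z T + ηb)
  unfold lqCost lqFirstVariation
  simp only [Pi.sub_apply]
  linarith [add_dotProduct (QbI *ᵥ (x' T - sb)) (Qb *ᵥ (x' T - (Γb *ᵥ z T + ηb))) (x T - x' T)]

theorem feedback_control_optimal_general
    {n m : ℕ} {T : ℝ} (hT : 0 < T)
    (A C QI Q QbI Qb Γ Γb : Matrix (Fin n) (Fin n) ℝ)
    (B F : Matrix (Fin n) (Fin m) ℝ)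
    (s η sb ηb : Fin n → ℝ) (x₀ : Fin n → ℝ)
    (R : Matrix (Fin m) (Fin m) ℝ) (hR : R.PosDef)
    (hQI : QI.PosSemidef) (hQ : Q.PosSemidef) (hQbI : QbI.PosSemidef) (hQb : Qb.PosSemidef)
    -- z, ū : continuous mean-field trajectories
    (z : ℝ → Fin n → ℝ) (ubar : ℝ → Fin m → ℝ)
    (hz : Continuous z)
    -- P1 : C¹ solution of the non-symmetric Riccati equation with P1(T) = Q̄_I + Q̄
    (P1 : ℝ → Matrix (Fin n) (Fin n) ℝ)
    (hP1 : ∀ t ∈ Set.Icc (0:ℝ) T, HasDerivWithinAt P1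
      (-(P1 t * A + Aᵀ * P1 t + (QI + Q) - P1 t * B * R⁻¹ * Bᵀ * P1 t)) (Set.Icc 0 T) t)
    (hP1T : P1 T = QbI + Qb)
    -- g : solution of the backward linear ODE
    (g : ℝ → Fin n → ℝ)
    (hg : ∀ t ∈ Set.Icc (0:ℝ) T, HasDerivWithinAt g
      (-((Aᵀ - P1 t * B * R⁻¹ * Bᵀ) *ᵥ g t + (P1 t * C - Q * Γ) *ᵥ z t
        + (P1 t * F) *ᵥ ubar t - QI *ᵥ s - Q *ᵥ η)) (Set.Icc 0 T) t)
    (hgT : g T = -(QbI *ᵥ sb) - Qb *ᵥ (Γb *ᵥ z T + ηb))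
    -- x* : closed-loop trajectory, u* : feedback control
    (xstar : ℝ → Fin n → ℝ)
    (hxstar : ∀ t ∈ Set.Icc (0:ℝ) T, HasDerivWithinAt xstar
      (A *ᵥ xstar t - (B * R⁻¹ * Bᵀ) *ᵥ (P1 t *ᵥ xstar t + g t)
        + C *ᵥ z t + F *ᵥ ubar t) (Set.Icc 0 T) t)
    (hxstar0 : xstar 0 = x₀)
    (ustar : ℝ → Fin m → ℝ)
    (hustar : ∀ t, ustar t = -((R⁻¹ * Bᵀ) *ᵥ (P1 t *ᵥ xstar t + g t))) :
    ∀ (u : ℝ → Fin m → ℝ) (xu : ℝ → Fin n → ℝ), Continuous u →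
      (∀ t ∈ Set.Icc (0:ℝ) T, HasDerivWithinAt xu
        (A *ᵥ xu t + B *ᵥ u t + C *ᵥ z t + F *ᵥ ubar t) (Set.Icc 0 T) t) →
      xu 0 = x₀ →
      lqCost T QI Q QbI Qb Γ Γb R s η sb ηb z ustar xstar
        ≤ lqCost T QI Q QbI Qb Γ Γb R s η sb ηb z u xu := by
  intro u xu hu hxu hxu0
  set p : ℝ → Fin n → ℝ := fun t => P1 t *ᵥ xstar t + g t with hp
  have hRustar (t : ℝ) : R *ᵥ ustar t = -(Bᵀ *ᵥ p t) := by
    rw [hustar, Matrix.mulVec_neg, Matrix.mulVec_mulVec, ← Matrix.mul_assoc,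
      Matrix.mul_nonsing_inv R hR.det_pos.ne'.isUnit, Matrix.one_mul]
  have hxstarc := HasDerivWithinAt.continuousOn hxstar
  have hustarc : ContinuousOn ustar (Icc 0 T) := by
    have := HasDerivWithinAt.continuousOn hP1
    have := HasDerivWithinAt.continuousOn hg
    exact (by fun_prop : ContinuousOn (fun t => -((R⁻¹ * Bᵀ) *ᵥ p t)) _).congr
      fun t _ => hustar t
  have hcostate (t : ℝ) (ht : t ∈ Icc 0 T) :=
    hasDerivWithinAt_riccati_costate (hP1 t ht) (hg t ht) (hxstar t ht)
  have hdeviation (t : ℝ) (ht : t ∈ Icc 0 T) : HasDerivWithinAt (xu - xstar)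
      (A *ᵥ (xu - xstar) t + B *ᵥ (u - ustar) t) (Icc 0 T) t := by
    refine ((hxu t ht).sub (hxstar t ht)).congr_deriv ?_
    rw [Pi.sub_apply, Pi.sub_apply, hustar]
    simp only [Matrix.mulVec_add, Matrix.mulVec_sub, Matrix.mulVec_neg, ← Matrix.mulVec_mulVec]
    abel
  have hpT : p T = QbI *ᵥ (xstar T - sb) + Qb *ᵥ (xstar T - (Γb *ᵥ z T + ηb)) := by
    simp only [hp, hP1T, hgT, Matrix.add_mulVec, Matrix.mulVec_sub, Matrix.mulVec_add]
    abel
  have hfirstVariation : lqFirstVariation T QI Q QbI Qb Γ Γb R s η sb ηb z ustar xstar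
      (u - ustar) (xu - xstar) = 0 := by
    simp only [lqFirstVariation, hRustar, neg_dotProduct, ← sub_eq_add_neg]
    rw [integral_dotProduct_adjoint hT.le hcostate hdeviation (by fun_prop)
      (hu.continuousOn.sub hustarc), ← hpT, Pi.sub_apply, hxu0, hxstar0, sub_self,
      dotProduct_zero]
    ring
  linarith [lqCost_add_lqFirstVariation_le hT.le hQI hQ hQbI hQb hR.posSemidef Γ Γb s η sb ηb
    hz.continuousOn (HasDerivWithinAt.continuousOn hxu) hxstarc hu.continuousOn
    hustarc]

/-- deterministic LQ optimality, noiseless analogue of Lemma 2.1 /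
Remark 2.1: the feedback control `u*(t) = −R⁻¹Bᵀ(P1(t)x*(t) + g(t))` along the
closed-loop trajectory `x*` minimizes the LQ cost over all continuous controls. -/
theorem feedback_control_optimal
    {n m : ℕ} {T : ℝ} (hT : 0 < T)
    (A C QI Q QbI Qb Γ Γb : Matrix (Fin n) (Fin n) ℝ)
    (B F : Matrix (Fin n) (Fin m) ℝ)
    (s η sb ηb : Fin n → ℝ) (x₀ : Fin n → ℝ)
    (R : Matrix (Fin m) (Fin m) ℝ) (hR : R.PosDef)
    (hQI : QI.PosSemidef) (hQ : Q.PosSemidef) (hQbI : QbI.PosSemidef) (hQb : Qb.PosSemidef)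
    -- z, ū : continuous mean-field trajectories
    (z : ℝ → Fin n → ℝ) (ubar : ℝ → Fin m → ℝ)
    (hz : Continuous z) (hubar : Continuous ubar)
    -- P1 : C¹ solution of the non-symmetric Riccati equation with P1(T) = Q̄_I + Q̄
    (P1 : ℝ → Matrix (Fin n) (Fin n) ℝ)
    (hP1 : ∀ t ∈ Set.Icc (0:ℝ) T, HasDerivWithinAt P1
      (-(P1 t * A + Aᵀ * P1 t + (QI + Q) - P1 t * B * R⁻¹ * Bᵀ * P1 t)) (Set.Icc 0 T) t)
    (hP1T : P1 T = QbI + Qb)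
    -- g : solution of the backward linear ODE
    (g : ℝ → Fin n → ℝ)
    (hg : ∀ t ∈ Set.Icc (0:ℝ) T, HasDerivWithinAt g
      (-((Aᵀ - P1 t * B * R⁻¹ * Bᵀ) *ᵥ g t + (P1 t * C - Q * Γ) *ᵥ z t
        + (P1 t * F) *ᵥ ubar t - QI *ᵥ s - Q *ᵥ η)) (Set.Icc 0 T) t)
    (hgT : g T = -(QbI *ᵥ sb) - Qb *ᵥ (Γb *ᵥ z T + ηb))
    -- x* : closed-loop trajectory, u* : feedback control
    (xstar : ℝ → Fin n → ℝ)
    (hxstar : ∀ t ∈ Set.Icc (0:ℝ) T, HasDerivWithinAt xstar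
      (A *ᵥ xstar t - (B * R⁻¹ * Bᵀ) *ᵥ (P1 t *ᵥ xstar t + g t)
        + C *ᵥ z t + F *ᵥ ubar t) (Set.Icc 0 T) t)
    (hxstar0 : xstar 0 = x₀)
    (ustar : ℝ → Fin m → ℝ)
    (hustar : ∀ t, ustar t = -((R⁻¹ * Bᵀ) *ᵥ (P1 t *ᵥ xstar t + g t))) :
    ∀ (u : ℝ → Fin m → ℝ) (xu : ℝ → Fin n → ℝ), Continuous u →
      (∀ t ∈ Set.Icc (0:ℝ) T, HasDerivWithinAt xu
        (A *ᵥ xu t + B *ᵥ u t + C *ᵥ z t + F *ᵥ ubar t) (Set.Icc 0 T) t) →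
      xu 0 = x₀ →
      lqCost T QI Q QbI Qb Γ Γb R s η sb ηb z ustar xstar
        ≤ lqCost T QI Q QbI Qb Γ Γb R s η sb ηb z u xu :=
  feedback_control_optimal_general hT A C QI Q QbI Qb Γ Γb B F s η sb ηb x₀ R hR hQI hQ hQbI hQb z
    ubar hz P1 hP1 hP1T g hg hgT xstar hxstar hxstar0 ustar hustar
end

section
/- Suppose z : [0,T] → ℝ^n solves z'(t) = (A + C − (B+F)R⁻¹BᵀP0(t))z(t) − (B+F)R⁻¹BᵀG(t), and g : [0,T] → ℝ^n solves g'(t) = −[(Aᵀ − P1(t)BR⁻¹Bᵀ)g(t) + (P1(t)C − QΓ)z(t) − P1(t)FR⁻¹Bᵀ(P0(t)z(t) + G(t)) − Q_I s − Qη] with g(T) = −Q̄_I s̄ − Q̄(Γ̄z(T) + η̄). Then P1(t)z(t) + g(t) = P0(t)z(t) + G(t) for every t ∈ [0,T]; i.e., the two feedback representations of the mean-field costate coincide along the equilibrium mean field state. -/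
open scoped Matrix

attribute [local instance] Matrix.normedAddCommGroup Matrix.normedSpace

/-!
The difference `w = P1 z + g - (P0 z + G)` of the two representations solves the homogeneous
linear equation `w' = (P1 B R⁻¹ Bᵀ - Aᵀ) w`: differentiating, the inhomogeneous terms and the
quadratic Riccati terms cancel. Both terminal conditions give `w T = 0`, so `w ≡ 0` by uniqueness
of solutions of Lipschitz ODEs.
-/

open Set

section MulVec

variable {𝕜 : Type*} [NontriviallyNormedField 𝕜] [CompleteSpace 𝕜] {m n : Type*} [Fintype m]
  [Fintype n]

variable (𝕜 m n) in
noncomputable def Matrix.mulVecCLM : Matrix m n 𝕜 →L[𝕜] (n → 𝕜) →L[𝕜] (m → 𝕜) :=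
  LinearMap.toContinuousLinearMap
    (LinearMap.toContinuousLinearMap.toLinearMap ∘ₗ Matrix.mulVecBilin 𝕜 𝕜)

@[simp] theorem Matrix.mulVecCLM_apply (M : Matrix m n 𝕜) (v : n → 𝕜) :
    Matrix.mulVecCLM 𝕜 m n M v = M *ᵥ v := rfl

theorem HasDerivWithinAt.matrix_mulVec_s15 {P : 𝕜 → Matrix m n 𝕜} {P' : Matrix m n 𝕜}
    {v : 𝕜 → n → 𝕜} {v' : n → 𝕜} {s : Set 𝕜} {t : 𝕜} (hP : HasDerivWithinAt P P' s t)
    (hv : HasDerivWithinAt v v' s t) :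
    HasDerivWithinAt (fun u => P u *ᵥ v u) (P' *ᵥ v t + P t *ᵥ v') s t :=
  ((Matrix.mulVecCLM 𝕜 m n).hasFDerivAt.comp_hasDerivWithinAt t hP).clm_apply hv

end MulVec

theorem eq_zero_of_linear_ODE_of_right_eq_zero {E : Type*} [NormedAddCommGroup E]
    [NormedSpace ℝ E] {L : ℝ → E →L[ℝ] E} {w : ℝ → E} {a b : ℝ}
    (hL : ContinuousOn L (Icc a b))
    (hw : ∀ t ∈ Icc a b, HasDerivWithinAt w (L t (w t)) (Icc a b) t) (hwb : w b = 0) :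
    ∀ t ∈ Icc a b, w t = 0 := by
  obtain ⟨K, hK⟩ := isCompact_Icc.exists_bound_of_continuousOn hL
  have hLip : ∀ t ∈ Ioc a b, LipschitzOnWith K.toNNReal (L t) univ := fun t ht =>
    ((L t).lipschitz.weaken <| by
      rw [← NNReal.coe_le_coe, coe_nnnorm]
      exact (hK t (Ioc_subset_Icc_self ht)).trans K.le_coe_toNNReal).lipschitzOnWith
  have hzero : ∀ t ∈ Ioc a b, HasDerivWithinAt (fun _ => (0 : E)) (L t 0) (Iic t) t := fun t _ =>
    by simpa using hasDerivWithinAt_const t (Iic t) (0 : E)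
  exact ODE_solution_unique_of_mem_Icc_left hLip (fun t ht => (hw t ht).continuousWithinAt)
    (fun t ht => (hw t (Ioc_subset_Icc_self ht)).mono_of_mem_nhdsWithin
      (Icc_mem_nhdsLE_of_mem ht)) (fun _ _ => trivial) continuousOn_const hzero
    (fun _ _ => trivial) hwb

theorem costate_representations_coincide_general
    {n m : ℕ} {T : ℝ}
    (A C QI Q QbI Qb Γ Γb : Matrix (Fin n) (Fin n) ℝ)
    (B F : Matrix (Fin n) (Fin m) ℝ)
    (s η sb ηb : Fin n → ℝ)
    (R : Matrix (Fin m) (Fin m) ℝ)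
    -- P0 : C¹ solution of the non-symmetric Riccati equation with P0(T) = Q̄_I + Q̄ − Q̄Γ̄
    (P0 : ℝ → Matrix (Fin n) (Fin n) ℝ)
    (hP0 : ∀ t ∈ Set.Icc (0:ℝ) T, HasDerivWithinAt P0
      (-(P0 t * (A + C) + Aᵀ * P0 t + (QI + Q - Q * Γ)
        - P0 t * (B + F) * R⁻¹ * Bᵀ * P0 t)) (Set.Icc 0 T) t)
    (hP0T : P0 T = QbI + Qb - Qb * Γb)
    -- P1 : C¹ solution of the non-symmetric Riccati equation with P1(T) = Q̄_I + Q̄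
    (P1 : ℝ → Matrix (Fin n) (Fin n) ℝ)
    (hP1 : ∀ t ∈ Set.Icc (0:ℝ) T, HasDerivWithinAt P1
      (-(P1 t * A + Aᵀ * P1 t + (QI + Q) - P1 t * B * R⁻¹ * Bᵀ * P1 t)) (Set.Icc 0 T) t)
    (hP1T : P1 T = QbI + Qb)
    -- G : C¹ solution of the backward linear ODE
    (G : ℝ → Fin n → ℝ)
    (hG : ∀ t ∈ Set.Icc (0:ℝ) T, HasDerivWithinAt G
      (-((Aᵀ - P0 t * (B + F) * R⁻¹ * Bᵀ) *ᵥ G t) + (QI *ᵥ s + Q *ᵥ η)) (Set.Icc 0 T) t)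
    (hGT : G T = -(QbI *ᵥ sb) - Qb *ᵥ ηb)
    -- z : solution of the equilibrium mean-field ODE
    (z : ℝ → Fin n → ℝ)
    (hz : ∀ t ∈ Set.Icc (0:ℝ) T, HasDerivWithinAt z
      ((A + C - (B + F) * R⁻¹ * Bᵀ * P0 t) *ᵥ z t - ((B + F) * R⁻¹ * Bᵀ) *ᵥ G t)
      (Set.Icc 0 T) t)
    -- g : solution of the backward linear ODE along z
    (g : ℝ → Fin n → ℝ)
    (hg : ∀ t ∈ Set.Icc (0:ℝ) T, HasDerivWithinAt g
      (-((Aᵀ - P1 t * B * R⁻¹ * Bᵀ) *ᵥ g t + (P1 t * C - Q * Γ) *ᵥ z t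
        - (P1 t * F * R⁻¹ * Bᵀ) *ᵥ (P0 t *ᵥ z t + G t) - QI *ᵥ s - Q *ᵥ η))
      (Set.Icc 0 T) t)
    (hgT : g T = -(QbI *ᵥ sb) - Qb *ᵥ (Γb *ᵥ z T + ηb)) :
    ∀ t ∈ Set.Icc (0:ℝ) T, P1 t *ᵥ z t + g t = P0 t *ᵥ z t + G t := by
  let M : ℝ → Matrix (Fin n) (Fin n) ℝ := fun t => -Aᵀ + P1 t * (B * R⁻¹ * Bᵀ)
  let w : ℝ → Fin n → ℝ := fun t => P1 t *ᵥ z t + g t - (P0 t *ᵥ z t + G t)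
  have hw : ∀ t ∈ Set.Icc (0:ℝ) T,
      HasDerivWithinAt w (Matrix.mulVecCLM ℝ _ _ (M t) (w t)) (Set.Icc 0 T) t := by
    intro t ht
    refine ((((hP1 t ht).matrix_mulVec_s15 (hz t ht)).add (hg t ht)).sub
      (((hP0 t ht).matrix_mulVec_s15 (hz t ht)).add (hG t ht))).congr_deriv ?_
    simp only [M, w, Matrix.mulVecCLM_apply, Matrix.add_mulVec, Matrix.sub_mulVec,
      Matrix.neg_mulVec, ← Matrix.mulVec_mulVec, Matrix.mulVec_add, Matrix.mulVec_sub]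
    abel
  have hwT : w T = 0 := by
    simp only [w, hP0T, hP1T, hGT, hgT, Matrix.add_mulVec, Matrix.sub_mulVec,
      ← Matrix.mulVec_mulVec, Matrix.mulVec_add]
    abel
  have hM : ContinuousOn (fun t => Matrix.mulVecCLM ℝ _ _ (M t)) (Set.Icc 0 T) :=
    (Matrix.mulVecCLM ℝ _ _).continuous.comp_continuousOn <| continuousOn_const.add <|
      ContinuousOn.mul (fun t ht => (hP1 t ht).continuousWithinAt) continuousOn_const
  exact fun t ht => sub_eq_zero.mp (eq_zero_of_linear_ODE_of_right_eq_zero hM hw hwT t ht)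

/-- along the equilibrium mean field state `z`, the two feedback
representations of the mean-field costate coincide: `P1(t)z(t) + g(t) = P0(t)z(t) + G(t)`
on `[0, T]`. -/
theorem costate_representations_coincide
    {n m : ℕ} {T : ℝ} (hT : 0 < T)
    (A C QI Q QbI Qb Γ Γb : Matrix (Fin n) (Fin n) ℝ)
    (B F : Matrix (Fin n) (Fin m) ℝ)
    (s η sb ηb : Fin n → ℝ)
    (R : Matrix (Fin m) (Fin m) ℝ) (hR : R.PosDef)
    -- P0 : C¹ solution of the non-symmetric Riccati equation with P0(T) = Q̄_I + Q̄ − Q̄Γ̄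
    (P0 : ℝ → Matrix (Fin n) (Fin n) ℝ)
    (hP0 : ∀ t ∈ Set.Icc (0:ℝ) T, HasDerivWithinAt P0
      (-(P0 t * (A + C) + Aᵀ * P0 t + (QI + Q - Q * Γ)
        - P0 t * (B + F) * R⁻¹ * Bᵀ * P0 t)) (Set.Icc 0 T) t)
    (hP0T : P0 T = QbI + Qb - Qb * Γb)
    -- P1 : C¹ solution of the non-symmetric Riccati equation with P1(T) = Q̄_I + Q̄
    (P1 : ℝ → Matrix (Fin n) (Fin n) ℝ)
    (hP1 : ∀ t ∈ Set.Icc (0:ℝ) T, HasDerivWithinAt P1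
      (-(P1 t * A + Aᵀ * P1 t + (QI + Q) - P1 t * B * R⁻¹ * Bᵀ * P1 t)) (Set.Icc 0 T) t)
    (hP1T : P1 T = QbI + Qb)
    -- G : C¹ solution of the backward linear ODE
    (G : ℝ → Fin n → ℝ)
    (hG : ∀ t ∈ Set.Icc (0:ℝ) T, HasDerivWithinAt G
      (-((Aᵀ - P0 t * (B + F) * R⁻¹ * Bᵀ) *ᵥ G t) + (QI *ᵥ s + Q *ᵥ η)) (Set.Icc 0 T) t)
    (hGT : G T = -(QbI *ᵥ sb) - Qb *ᵥ ηb)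
    -- z : solution of the equilibrium mean-field ODE
    (z : ℝ → Fin n → ℝ)
    (hz : ∀ t ∈ Set.Icc (0:ℝ) T, HasDerivWithinAt z
      ((A + C - (B + F) * R⁻¹ * Bᵀ * P0 t) *ᵥ z t - ((B + F) * R⁻¹ * Bᵀ) *ᵥ G t)
      (Set.Icc 0 T) t)
    -- g : solution of the backward linear ODE along z
    (g : ℝ → Fin n → ℝ)
    (hg : ∀ t ∈ Set.Icc (0:ℝ) T, HasDerivWithinAt g
      (-((Aᵀ - P1 t * B * R⁻¹ * Bᵀ) *ᵥ g t + (P1 t * C - Q * Γ) *ᵥ z t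
        - (P1 t * F * R⁻¹ * Bᵀ) *ᵥ (P0 t *ᵥ z t + G t) - QI *ᵥ s - Q *ᵥ η))
      (Set.Icc 0 T) t)
    (hgT : g T = -(QbI *ᵥ sb) - Qb *ᵥ (Γb *ᵥ z T + ηb)) :
    ∀ t ∈ Set.Icc (0:ℝ) T, P1 t *ᵥ z t + g t = P0 t *ᵥ z t + G t :=
  costate_representations_coincide_general A C QI Q QbI Qb Γ Γb B F s η sb ηb R P0 hP0 hP0T P1 hP1
    hP1T G hG hGT z hz g hg hgT
end
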